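/- Over the Laurent polynomial ring ℤ[t,t⁻¹], the 6×6 matrix M (case n = 3 of the family β_n) with rows (t⁻², 0, 0, 0, 0, t⁻¹), (0, 0, 0, 0, 0, t⁻¹), (0, t⁻², 0, 0, 0, 0), (t⁻², 0, t⁻¹, 0, 0, 0), (t⁻², 0, 0, t⁻¹, 0, 0), (t⁻², 0, 0, 0, t⁻¹, 0) has characteristic polynomial u⁶ − t⁻²u⁵ − t⁻³u⁴ − t⁻⁴u³ − t⁻⁵u² − t⁻⁶u + t⁻⁸. -/
import Mathlib


open LaurentPolynomial Matrix

set_option maxRecDepth 100000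
set_option maxHeartbeats 4000000

@[simp]
lemma cons_val_five {α : Type*} {m : ℕ} (x : α) (u : Fin m.succ.succ.succ.succ.succ → α) :
    Matrix.vecCons x u 5 = Matrix.vecHead (Matrix.vecTail (Matrix.vecTail (Matrix.vecTail (Matrix.vecTail u)))) :=
  rfl

noncomputable def tc (k : ℤ) : Polynomial (LaurentPolynomial ℤ) := Polynomial.C (T k)

lemma tc_def (k : ℤ) : Polynomial.C (T k) = tc k := rfl

lemma tc_mul (a b : ℤ) : tc a * tc b = tc (a + b) := by
  rw [tc, tc, tc, ← _root_.map_mul, ← T_add]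

lemma tc_pow (a : ℤ) (n : ℕ) : tc a ^ n = tc (n * a) := by
  rw [tc, tc, ← map_pow, T_pow]


/-- For n = 3 of the braid family β_n = δ_nδ₃σ₁ ∈ B_{n+4}: the 6×6 lifted
incidence matrix has characteristic polynomial
u⁶ − t⁻²u⁵ − t⁻³u⁴ − t⁻⁴u³ − t⁻⁵u² − t⁻⁶u + t⁻⁸. -/
theorem stmt18 :
    (!![T (-2), 0, 0, 0, 0, T (-1);
        0, 0, 0, 0, 0, T (-1);
        0, T (-2), 0, 0, 0, 0;
        T (-2), 0, T (-1), 0, 0, 0;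
        T (-2), 0, 0, T (-1), 0, 0;
        T (-2), 0, 0, 0, T (-1), 0] : Matrix (Fin 6) (Fin 6) (LaurentPolynomial ℤ)).charpoly
      = Polynomial.X ^ 6 - Polynomial.C (T (-2)) * Polynomial.X ^ 5
        - Polynomial.C (T (-3)) * Polynomial.X ^ 4 - Polynomial.C (T (-4)) * Polynomial.X ^ 3
        - Polynomial.C (T (-5)) * Polynomial.X ^ 2 - Polynomial.C (T (-6)) * Polynomial.X
        + Polynomial.C (T (-8)) := by
  rw [Matrix.charpoly]
  have h : charmatrix (!![T (-2), 0, 0, 0, 0, T (-1);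
        0, 0, 0, 0, 0, T (-1);
        0, T (-2), 0, 0, 0, 0;
        T (-2), 0, T (-1), 0, 0, 0;
        T (-2), 0, 0, T (-1), 0, 0;
        T (-2), 0, 0, 0, T (-1), 0] : Matrix (Fin 6) (Fin 6) (LaurentPolynomial ℤ))
      = (!![Polynomial.X - tc (-2), 0, 0, 0, 0, -tc (-1);
           0, Polynomial.X, 0, 0, 0, -tc (-1);
           0, -tc (-2), Polynomial.X, 0, 0, 0;
           -tc (-2), 0, -tc (-1), Polynomial.X, 0, 0;
           -tc (-2), 0, 0, -tc (-1), Polynomial.X, 0;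
           -tc (-2), 0, 0, 0, -tc (-1), Polynomial.X] :
           Matrix (Fin 6) (Fin 6) (Polynomial (LaurentPolynomial ℤ))) := by
    refine Matrix.ext fun i j => ?_
    fin_cases i <;> fin_cases j <;>
      first
      | (rw [charmatrix_apply_eq]
         simp [tc, Matrix.cons_val_succ, Matrix.vecHead, Matrix.vecTail, Function.comp])
      | (rw [charmatrix_apply_ne _ _ _ (by decide)]
         simp [tc, Matrix.cons_val_succ, Matrix.vecHead, Matrix.vecTail, Function.comp])
  rw [h]
  simp only [Matrix.det_succ_row_zero, Fin.sum_univ_succ, Matrix.det_unique,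
    Fin.default_eq_zero, Matrix.submatrix_apply, Matrix.submatrix_submatrix,
    Function.comp_apply, Fin.zero_succAbove, Fin.succ_succAbove_zero,
    Fin.succ_succAbove_succ, Finset.univ_unique, Finset.sum_singleton, Fin.sum_univ_zero,
    Matrix.cons_val_zero, Matrix.cons_val_succ, Fin.val_zero, Fin.val_succ, pow_succ, pow_zero,
    Matrix.of_apply, Matrix.cons_val', Matrix.cons_val_fin_one, Matrix.head_cons,
    Matrix.head_fin_const, Matrix.empty_val']
  rw [tc_def, tc_def, tc_def, tc_def, tc_def, tc_def]
  ring_nf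
  simp only [tc_mul, tc_pow]
  norm_num
  ring_nf
  simp only [tc_mul, tc_pow]
  norm_num
  simp only [mul_assoc, tc_mul]
  norm_num
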